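/- Let m > 0. Then the spectral density ρ satisfies: (i) ρ(M) ≥ 0 for all M; (ii) ρ is square-integrable on [4m², ∞); and (iii) ρ is Hölder continuous of exponent 1/2 on [4m², ∞): there exists C ≥ 0 such that |ρ(M) − ρ(M′)| ≤ C·|M − M′|^{1/2} for all M, M′ ≥ 4m². -/

import Mathlib

open MeasureTheory Set Real

/-!
With `a = 4m²` and `u = a/M ∈ (0, 1]`, one has `ρ(M) = (16π²a)⁻¹ · u√(1 − u)` on `[a, ∞)`.
The map `u ↦ u√(1 − u)` is ½-Hölder on `[0, 1]` because `√` is, and `M ↦ a/M` is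
Lipschitz with constant `1/a` on `[a, ∞)`; composing gives the Hölder bound. Square
integrability follows from `0 ≤ ρ(M) ≤ (16π²M)⁻¹`.
-/

/-- The spectral density `ρ(M) = (1/(16π²M))·√(1 − 4m²/M)` for `M ≥ 4m²`, and `0` otherwise. -/
noncomputable def rho (m M : ℝ) : ℝ :=
  if 4 * m ^ 2 ≤ M then (1 / (16 * Real.pi ^ 2 * M)) * Real.sqrt (1 - 4 * m ^ 2 / M) else 0

lemma abs_sqrt_sub_sqrt_le (x y : ℝ) : |√x - √y| ≤ √|x - y| := by
  wlog hyx : y ≤ x generalizing x y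
  · rw [abs_sub_comm, abs_sub_comm x]
    exact this y x (le_of_not_ge hyx)
  have hxy : 0 ≤ x - y := sub_nonneg.2 hyx
  rw [abs_of_nonneg (sub_nonneg.2 (Real.sqrt_le_sqrt hyx)), abs_of_nonneg hxy, sub_le_iff_le_add]
  refine Real.sqrt_le_iff.2 ⟨by positivity, ?_⟩
  nlinarith [Real.sq_sqrt' (x := y), Real.sq_sqrt hxy, Real.sqrt_nonneg y,
    Real.sqrt_nonneg (x - y), le_max_left y 0]

lemma abs_mul_sqrt_one_sub_sub_le {u v : ℝ} (hu : u ∈ Icc (0 : ℝ) 1)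
    (hv : v ∈ Icc (0 : ℝ) 1) :
    |u * √(1 - u) - v * √(1 - v)| ≤ 2 * √|u - v| := by
  have hsqrt_le_one : √(1 - u) ≤ 1 := Real.sqrt_le_one.2 (by linarith [hu.1])
  have hdist_le_one : |u - v| ≤ 1 :=
    abs_sub_le_iff.2 ⟨by linarith [hu.2, hv.1], by linarith [hu.1, hv.2]⟩
  have hdist_le_sqrt : |u - v| ≤ √|u - v| :=
    Real.le_sqrt_of_sq_le (by nlinarith [abs_nonneg (u - v)])
  calc |u * √(1 - u) - v * √(1 - v)|
      = |(u - v) * √(1 - u) + v * (√(1 - u) - √(1 - v))| := by ring_nf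
    _ ≤ |u - v| * √(1 - u) + v * |√(1 - u) - √(1 - v)| := by
      refine (abs_add_le _ _).trans_eq ?_
      rw [abs_mul, abs_mul, abs_of_nonneg (Real.sqrt_nonneg _), abs_of_nonneg hv.1]
    _ ≤ |u - v| * 1 + 1 * √|u - v| := by
      gcongr
      · exact hv.2
      · exact (abs_sqrt_sub_sqrt_le _ _).trans_eq (by rw [sub_sub_sub_cancel_left, abs_sub_comm])
    _ ≤ 2 * √|u - v| := by linarith

lemma abs_div_sub_div_le {a M M' : ℝ} (ha : 0 < a) (hM : a ≤ M) (hM' : a ≤ M') :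
    |a / M - a / M'| ≤ |M - M'| / a := by
  have hM0 : 0 < M := ha.trans_le hM
  have hM'0 : 0 < M' := ha.trans_le hM'
  rw [div_sub_div _ _ hM0.ne' hM'0.ne', abs_div, abs_of_pos (mul_pos hM0 hM'0),
    div_le_div_iff₀ (mul_pos hM0 hM'0) ha, show a * M' - M * a = a * (M' - M) by ring, abs_mul,
    abs_of_pos ha, abs_sub_comm, mul_comm a, mul_assoc]
  gcongr

lemma measurable_rho (m : ℝ) : Measurable (rho m) :=
  Measurable.ite (measurableSet_le measurable_const measurable_id) (by fun_prop) measurable_const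

lemma rho_nonneg (m M : ℝ) : 0 ≤ rho m M := by
  unfold rho
  split_ifs with hM
  · have : 0 ≤ M := (by positivity : (0 : ℝ) ≤ 4 * m ^ 2).trans hM
    positivity
  · exact le_rfl

lemma rho_le_inv {m M : ℝ} (hM : 4 * m ^ 2 ≤ M) :
    rho m M ≤ (16 * π ^ 2)⁻¹ * M⁻¹ := by
  have hM0 : 0 ≤ M := (by positivity : (0 : ℝ) ≤ 4 * m ^ 2).trans hM
  rw [rho, if_pos hM, one_div, mul_inv]
  exact mul_le_of_le_one_right (by positivity) (Real.sqrt_le_one.2 (by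
    have : 0 ≤ 4 * m ^ 2 / M := by positivity
    linarith))

lemma rho_eq_mul_sqrt_one_sub {m M : ℝ} (hm : 0 < m) (hM : 4 * m ^ 2 ≤ M) :
    rho m M = (16 * π ^ 2 * (4 * m ^ 2))⁻¹ * (4 * m ^ 2 / M * √(1 - 4 * m ^ 2 / M)) := by
  have hM0 : 0 < M := (by positivity : (0 : ℝ) < 4 * m ^ 2).trans_le hM
  rw [rho, if_pos hM]
  field_simp

lemma memLp_two_rho {m : ℝ} (hm : 0 < m) :
    MemLp (rho m) 2 (volume.restrict (Ici (4 * m ^ 2))) := by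
  refine (memLp_two_iff_integrable_sq (measurable_rho m).aestronglyMeasurable).2 ?_
  have hdom : IntegrableOn (fun M : ℝ => ((16 * π ^ 2)⁻¹) ^ 2 * M ^ (-2 : ℝ))
      (Ici (4 * m ^ 2)) := by
    rw [integrableOn_Ici_iff_integrableOn_Ioi]
    exact (integrableOn_Ioi_rpow_of_lt (by norm_num) (by positivity)).const_mul _
  refine hdom.mono' ((measurable_rho m).pow_const 2).aestronglyMeasurable ?_
  refine (ae_restrict_iff' measurableSet_Ici).2 (Filter.Eventually.of_forall fun M hM => ?_)
  have hM0 : 0 < M := (by positivity : (0 : ℝ) < 4 * m ^ 2).trans_le hM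
  rw [Real.norm_of_nonneg (by positivity), Real.rpow_neg hM0.le, Real.rpow_two, ← inv_pow,
    ← mul_pow]
  exact pow_le_pow_left₀ (rho_nonneg m M) (rho_le_inv hM) 2

lemma abs_rho_sub_rho_le {m M M' : ℝ} (hm : 0 < m) (hM : 4 * m ^ 2 ≤ M)
    (hM' : 4 * m ^ 2 ≤ M') :
    |rho m M - rho m M'| ≤ (8 * π ^ 2 * (4 * m ^ 2) * √(4 * m ^ 2))⁻¹ * √|M - M'| := by
  set a := 4 * m ^ 2
  have ha : 0 < a := by positivity
  have hunit {N : ℝ} (hN : a ≤ N) : a / N ∈ Icc (0 : ℝ) 1 :=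
    ⟨div_nonneg ha.le (ha.le.trans hN), (div_le_one (ha.trans_le hN)).2 hN⟩
  rw [rho_eq_mul_sqrt_one_sub hm hM, rho_eq_mul_sqrt_one_sub hm hM', ← mul_sub, abs_mul,
    abs_of_pos (by positivity)]
  calc (16 * π ^ 2 * a)⁻¹ * |a / M * √(1 - a / M) - a / M' * √(1 - a / M')|
      ≤ (16 * π ^ 2 * a)⁻¹ * (2 * √(|M - M'| / a)) := by
        gcongr
        exact (abs_mul_sqrt_one_sub_sub_le (hunit hM) (hunit hM')).trans
          (by gcongr; exact abs_div_sub_div_le ha hM hM')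
    _ = (8 * π ^ 2 * a * √a)⁻¹ * √|M - M'| := by
        rw [Real.sqrt_div' _ ha.le]
        field_simp
        ring

theorem stmt_17 (m : ℝ) (hm : 0 < m) :
    (∀ M : ℝ, 0 ≤ rho m M) ∧
    MemLp (rho m) 2 (volume.restrict (Set.Ici (4 * m ^ 2))) ∧
    ∃ C : ℝ, 0 ≤ C ∧ ∀ M M' : ℝ, 4 * m ^ 2 ≤ M → 4 * m ^ 2 ≤ M' →
      |rho m M - rho m M'| ≤ C * |M - M'| ^ ((1 : ℝ) / 2) := by
  refine ⟨rho_nonneg m, memLp_two_rho hm, (8 * π ^ 2 * (4 * m ^ 2) * √(4 * m ^ 2))⁻¹,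
    by positivity, fun M M' hM hM' => ?_⟩
  rw [← Real.sqrt_eq_rpow]
  exact abs_rho_sub_rho_le hm hM hM'
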